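/- arXiv:1807.11167 — 2 statements merged into one kernel-verified Lean document; each statement's English description precedes it below -/
import Mathlib

section
/- Affine subgroup identification: there is a bijection Ψ between the set of all subgroups of AFF(ℝⁿ) and the set Σ of triples (L, V, ξ) where L ≤ GLₙ(ℝ), V ≤ ℝⁿ, and ξ : L → ℝⁿ/V is a vector system (satisfying AV = V for A ∈ L and the cocycle condition ξ(AA') = ξ(A) + Aξ(A')). The inverse map sends (L, V, ξ) to the subgroup {f_{A,u} ∈ AFF(ℝⁿ) : A ∈ L, u ∈ ξ(A)}. -/
open Pointwise

/-- A triple `(L, V, ξ)` where `L ≤ GLₙ(ℝ)`, `V ≤ ℝⁿ`, and `ξ : L → ℝⁿ/V` is an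
`(L,V)`-vector system: each `ξ(A)` is a coset of `V`, `AV = V` for every `A ∈ L`, and the
cocycle condition `ξ(AA') = ξ(A) + Aξ(A')` holds. -/
structure AffineSubgroupData (n : ℕ) where
  L : Subgroup ((Fin n → ℝ) ≃ₗ[ℝ] (Fin n → ℝ))
  V : AddSubgroup (Fin n → ℝ)
  xi : L → Set (Fin n → ℝ)
  coset : ∀ A : L, ∃ u : Fin n → ℝ, xi A = {x | ∃ v ∈ V, x = v + u}
  compat : ∀ A : L, (fun x => (A : (Fin n → ℝ) ≃ₗ[ℝ] (Fin n → ℝ)) x) '' (V : Set (Fin n → ℝ))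
      = (V : Set (Fin n → ℝ))
  cocycle : ∀ A B : L,
      xi (A * B) = xi A + (fun x => (A : (Fin n → ℝ) ≃ₗ[ℝ] (Fin n → ℝ)) x) '' xi B

/-!
Every affine automorphism is `f = f_{A,u}` with `A = f.linear` and `u = f 0`, and
`f_{A,u} ∘ f_{B,w} = f_{AB, u + A w}`. Hence the cocycle condition says exactly that
`{f_{A,u} : u ∈ ξ(A)}` is closed under composition, and `V = ξ(1)` is the group of translations
it contains. Conversely, for a subgroup `H`, the translation parts `ξ_H(A)` form a coset of the
translation subgroup because `f_{A,x} = t_{x-u} ∘ f_{A,u}`, and `A V = V` because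
`f ∘ t_v ∘ f⁻¹ = t_{f.linear v}`. Here `f_{A,u}` is `ofLinearEquiv A 0 u` and `t_v` is
`constVAdd ℝ _ v`.
-/

namespace AffineEquiv

variable {k V : Type*} [Ring k] [AddCommGroup V] [Module k V]

theorem apply_eq_linear_add (f : V ≃ᵃ[k] V) (x : V) : f x = f.linear x + f 0 := by
  simpa using congrFun (AffineMap.decomp f.toAffineMap) x

theorem inv_apply_zero (f : V ≃ᵃ[k] V) : f⁻¹ 0 = -f.linear⁻¹ (f 0) := by
  rw [inv_def, symm_apply_eq, apply_eq_linear_add, map_neg]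
  simp

theorem ofLinearEquiv_linear_apply_zero (f : V ≃ᵃ[k] V) : ofLinearEquiv f.linear 0 (f 0) = f := by
  ext x
  simp [apply_eq_linear_add f x]

theorem ofLinearEquiv_mul_ofLinearEquiv (A B : V ≃ₗ[k] V) (u w : V) :
    ofLinearEquiv A 0 u * ofLinearEquiv B 0 w = ofLinearEquiv (A * B) 0 (u + A w) := by
  ext x
  simp [add_comm u, add_assoc]

theorem constVAdd_mul_ofLinearEquiv (A : V ≃ₗ[k] V) (u v : V) :
    constVAdd k V v * ofLinearEquiv A 0 u = ofLinearEquiv A 0 (v + u) := by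
  ext x
  simp [add_left_comm]

theorem mul_constVAdd_mul_inv (f : V ≃ᵃ[k] V) (v : V) :
    f * constVAdd k V v * f⁻¹ = constVAdd k V (f.linear v) := by
  ext x
  rw [coe_mul, coe_mul, Function.comp_apply, Function.comp_apply, constVAdd_apply, f.map_vadd,
    inv_def, apply_symm_apply, constVAdd_apply]

variable (H : Subgroup (V ≃ᵃ[k] V))

theorem ofLinearEquiv_mem_iff_constVAdd_sub_mem {A : V ≃ₗ[k] V} {u : V}
    (hu : ofLinearEquiv A 0 u ∈ H) (x : V) :
    ofLinearEquiv A 0 x ∈ H ↔ constVAdd k V (x - u) ∈ H := by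
  rw [← H.mul_mem_cancel_right hu (y := constVAdd k V (x - u)), constVAdd_mul_ofLinearEquiv,
    sub_add_cancel]

theorem constVAdd_linear_mem_iff {f : V ≃ᵃ[k] V} (hf : f ∈ H) (v : V) :
    constVAdd k V (f.linear v) ∈ H ↔ constVAdd k V v ∈ H := by
  rw [← mul_constVAdd_mul_inv, H.mul_mem_cancel_right (H.inv_mem hf), H.mul_mem_cancel_left hf]

theorem ofLinearEquiv_mul_mem_iff {B : V ≃ₗ[k] V} {w : V} (hw : ofLinearEquiv B 0 w ∈ H)
    (A : V ≃ₗ[k] V) (u : V) :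
    ofLinearEquiv (A * B) 0 u ∈ H ↔ ofLinearEquiv A 0 (u - A w) ∈ H := by
  rw [← H.mul_mem_cancel_right hw (y := ofLinearEquiv A 0 (u - A w)),
    ofLinearEquiv_mul_ofLinearEquiv, sub_add_cancel]

def translationSubgroup : AddSubgroup V :=
  Subgroup.toAddSubgroup' (H.comap (constVAddHom k V))

theorem mem_translationSubgroup {v : V} : v ∈ translationSubgroup H ↔ constVAdd k V v ∈ H := by
  simp [translationSubgroup]

theorem mem_map_linearHom {A : V ≃ₗ[k] V} :
    A ∈ H.map linearHom ↔ ∃ u, ofLinearEquiv A 0 u ∈ H := by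
  refine ⟨?_, fun ⟨u, hu⟩ => ⟨_, hu, rfl⟩⟩
  rintro ⟨f, hf, rfl⟩
  exact ⟨f 0, by rwa [linearHom_apply, ofLinearEquiv_linear_apply_zero]⟩

end AffineEquiv

open AffineEquiv

namespace AffineSubgroupData

variable {n : ℕ} (σ : AffineSubgroupData n)

theorem exists_mem_xi (A : σ.L) : ∃ u, u ∈ σ.xi A := by
  obtain ⟨u, hu⟩ := σ.coset A
  exact ⟨u, hu ▸ ⟨0, σ.V.zero_mem, (zero_add u).symm⟩⟩

theorem mem_xi_iff_sub_mem {A : σ.L} {u : Fin n → ℝ} (hu : u ∈ σ.xi A) (x : Fin n → ℝ) :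
    x ∈ σ.xi A ↔ x - u ∈ σ.V := by
  obtain ⟨w, hw⟩ := σ.coset A
  have mem_iff (y : Fin n → ℝ) : y ∈ σ.xi A ↔ y - w ∈ σ.V := by
    rw [hw]
    exact ⟨fun ⟨v, hv, hy⟩ => by simpa [hy] using hv, fun hy => ⟨y - w, hy, by abel⟩⟩
  rw [mem_iff, ← sub_add_sub_cancel x u w, σ.V.add_mem_cancel_right ((mem_iff u).mp hu)]

theorem add_mem_xi_mul {A B : σ.L} {a b : Fin n → ℝ} (ha : a ∈ σ.xi A) (hb : b ∈ σ.xi B) :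
    a + (A : (Fin n → ℝ) ≃ₗ[ℝ] (Fin n → ℝ)) b ∈ σ.xi (A * B) :=
  σ.cocycle A B ▸ Set.add_mem_add ha ⟨b, hb, rfl⟩

theorem xi_one : σ.xi 1 = σ.V := by
  obtain ⟨u, hu⟩ := σ.exists_mem_xi 1
  have huu : u + u ∈ σ.xi 1 := by simpa using σ.add_mem_xi_mul hu hu
  have hu_mem_V : u ∈ σ.V := by
    rwa [σ.mem_xi_iff_sub_mem hu, add_sub_cancel_right] at huu
  ext x
  rw [SetLike.mem_coe, σ.mem_xi_iff_sub_mem hu, ← σ.V.add_mem_cancel_right hu_mem_V,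
    sub_add_cancel]

theorem neg_inv_mem_xi_inv {A : σ.L} {u : Fin n → ℝ} (hu : u ∈ σ.xi A) :
    -(A⁻¹ : σ.L).1 u ∈ σ.xi A⁻¹ := by
  obtain ⟨w, hw⟩ := σ.exists_mem_xi A⁻¹
  have h := σ.add_mem_xi_mul hw hu
  rw [inv_mul_cancel, xi_one, SetLike.mem_coe] at h
  rw [σ.mem_xi_iff_sub_mem hw, ← neg_add', neg_mem_iff, add_comm]
  exact h

def toSubgroup : Subgroup ((Fin n → ℝ) ≃ᵃ[ℝ] (Fin n → ℝ)) where
  carrier := {f | ∃ hA : f.linear ∈ σ.L, f 0 ∈ σ.xi ⟨f.linear, hA⟩}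
  one_mem' := ⟨σ.L.one_mem, (σ.xi_one ▸ σ.V.zero_mem : (0 : Fin n → ℝ) ∈ σ.xi 1)⟩
  mul_mem' := by
    rintro f g ⟨hf, hf0⟩ ⟨hg, hg0⟩
    refine ⟨σ.L.mul_mem hf hg, ?_⟩
    rw [AffineEquiv.coe_mul, Function.comp_apply, apply_eq_linear_add, add_comm]
    exact σ.add_mem_xi_mul hf0 hg0
  inv_mem' := by
    rintro f ⟨hf, hf0⟩
    refine ⟨σ.L.inv_mem hf, ?_⟩
    rw [inv_apply_zero]
    exact σ.neg_inv_mem_xi_inv hf0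

theorem mem_toSubgroup {f : (Fin n → ℝ) ≃ᵃ[ℝ] (Fin n → ℝ)} :
    f ∈ σ.toSubgroup ↔ ∃ hA : f.linear ∈ σ.L, f 0 ∈ σ.xi ⟨f.linear, hA⟩ :=
  Iff.rfl

theorem ofLinearEquiv_mem_toSubgroup {A : (Fin n → ℝ) ≃ₗ[ℝ] (Fin n → ℝ)} {u : Fin n → ℝ} :
    ofLinearEquiv A 0 u ∈ σ.toSubgroup ↔ ∃ hA : A ∈ σ.L, u ∈ σ.xi ⟨A, hA⟩ := by
  simp [mem_toSubgroup]

theorem ext_of_mem_xi_iff {σ τ : AffineSubgroupData n}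
    (h : ∀ A u, (∃ hA : A ∈ σ.L, u ∈ σ.xi ⟨A, hA⟩) ↔ ∃ hA : A ∈ τ.L, u ∈ τ.xi ⟨A, hA⟩) :
    σ = τ := by
  have hL : σ.L = τ.L := by
    ext A
    refine ⟨fun hA => ?_, fun hA => ?_⟩
    · obtain ⟨u, hu⟩ := σ.exists_mem_xi ⟨A, hA⟩
      exact ((h A u).mp ⟨hA, hu⟩).1
    · obtain ⟨u, hu⟩ := τ.exists_mem_xi ⟨A, hA⟩
      exact ((h A u).mpr ⟨hA, hu⟩).1
  have hV : σ.V = τ.V := by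
    ext v
    rw [← SetLike.mem_coe, ← SetLike.mem_coe, ← σ.xi_one, ← τ.xi_one]
    exact ⟨fun hv => ((h 1 v).mp ⟨_, hv⟩).2, fun hv => ((h 1 v).mpr ⟨_, hv⟩).2⟩
  obtain ⟨L, V, xi, coset, compat, cocycle⟩ := σ
  obtain ⟨L', V', xi', coset', compat', cocycle'⟩ := τ
  subst hL hV
  obtain rfl : xi = xi' := by
    funext A
    ext u
    simpa using h A u
  rfl

theorem toSubgroup_injective : Function.Injective (toSubgroup (n := n)) := fun σ τ h =>
  ext_of_mem_xi_iff fun A u => by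
    rw [← ofLinearEquiv_mem_toSubgroup, ← ofLinearEquiv_mem_toSubgroup, h]

/-- `Ψ(H) = (ℓ(H), τ(T), ξ_H)`. -/
def ofSubgroup (H : Subgroup ((Fin n → ℝ) ≃ᵃ[ℝ] (Fin n → ℝ))) : AffineSubgroupData n where
  L := H.map linearHom
  V := translationSubgroup H
  xi A := {u | ofLinearEquiv A.1 0 u ∈ H}
  coset A := by
    obtain ⟨u, hu⟩ := (mem_map_linearHom H).mp A.2
    refine ⟨u, Set.ext fun x => ?_⟩
    rw [Set.mem_ofPred_eq, ofLinearEquiv_mem_iff_constVAdd_sub_mem H hu, ← mem_translationSubgroup]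
    exact ⟨fun hx => ⟨_, hx, (sub_add_cancel x u).symm⟩,
      fun ⟨v, hv, hx⟩ => by rwa [hx, add_sub_cancel_right]⟩
  compat A := by
    obtain ⟨u, hu⟩ := (mem_map_linearHom H).mp A.2
    change (A.1 : (Fin n → ℝ) → (Fin n → ℝ)) '' _ = _
    ext w
    rw [LinearEquiv.image_eq_preimage_symm, Set.mem_preimage, SetLike.mem_coe, SetLike.mem_coe,
      mem_translationSubgroup, mem_translationSubgroup, ← constVAdd_linear_mem_iff H hu,
      linear_ofLinearEquiv, LinearEquiv.apply_symm_apply]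
  cocycle A B := by
    obtain ⟨w, hw⟩ := (mem_map_linearHom H).mp B.2
    ext u
    simp only [Set.mem_ofPred_eq, Set.mem_add, Set.mem_image, Subgroup.coe_mul]
    refine ⟨fun hu => ⟨u - A.1 w, (ofLinearEquiv_mul_mem_iff H hw _ _).mp hu, _, ⟨w, hw, rfl⟩,
      sub_add_cancel _ _⟩, ?_⟩
    rintro ⟨a, ha, _, ⟨b, hb, rfl⟩, rfl⟩
    rw [← ofLinearEquiv_mul_ofLinearEquiv]
    exact H.mul_mem ha hb

theorem toSubgroup_ofSubgroup (H : Subgroup ((Fin n → ℝ) ≃ᵃ[ℝ] (Fin n → ℝ))) :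
    (ofSubgroup H).toSubgroup = H := by
  ext f
  change (∃ _ : f.linear ∈ H.map linearHom, ofLinearEquiv f.linear 0 (f 0) ∈ H) ↔ f ∈ H
  rw [ofLinearEquiv_linear_apply_zero]
  exact ⟨fun ⟨_, hf⟩ => hf, fun hf => ⟨⟨f, hf, rfl⟩, hf⟩⟩

def subgroupEquiv (n : ℕ) : Subgroup ((Fin n → ℝ) ≃ᵃ[ℝ] (Fin n → ℝ)) ≃ AffineSubgroupData n where
  toFun := ofSubgroup
  invFun := toSubgroup
  left_inv := toSubgroup_ofSubgroup
  right_inv σ := toSubgroup_injective (toSubgroup_ofSubgroup σ.toSubgroup)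

end AffineSubgroupData

/-- Affine subgroup identification: there is a bijection `Ψ` between the set of all subgroups of
`AFF(ℝⁿ)` and the set `Σ` of triples `(L, V, ξ)` with `L ≤ GLₙ(ℝ)`, `V ≤ ℝⁿ` and `ξ` an
`(L,V)`-vector system; the inverse sends `(L, V, ξ)` to the subgroup
`{f_{A,u} : A ∈ L, u ∈ ξ(A)}` (where `u = f(0)` is the translation part of `f`). -/
theorem affine_subgroup_identification (n : ℕ) :
    ∃ Ψ : Subgroup ((Fin n → ℝ) ≃ᵃ[ℝ] (Fin n → ℝ)) ≃ AffineSubgroupData n,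
      ∀ (σ : AffineSubgroupData n) (f : (Fin n → ℝ) ≃ᵃ[ℝ] (Fin n → ℝ)),
        f ∈ Ψ.symm σ ↔ ∃ hA : f.linear ∈ σ.L, f 0 ∈ σ.xi ⟨f.linear, hA⟩ :=
  ⟨AffineSubgroupData.subgroupEquiv n, fun σ _ => σ.mem_toSubgroup⟩
end

section
/- Every isometry of ℤⁿ (with respect to the Euclidean distance restricted to ℤⁿ) is the restriction of an isometry of ℝⁿ that stabilizes ℤⁿ setwise; conversely, every such restriction is an isometry of ℤⁿ. Hence ISO(ℤⁿ) = ISO(ℝⁿ)_{ℤⁿ}|_{ℤⁿ}. In particular, every isometry h of ℤⁿ is of the form h(x) = Ax + u with A ∈ Oₙ(ℤ) (an orthogonal matrix with integer entries) and u ∈ ℤⁿ. -/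
/-!
An isometry `h` of `ℤⁿ` preserves the dot products of the difference vectors `h x - h 0` by
polarization. Hence the vectors `h eⱼ - h 0` are orthonormal, the integer matrix `A` having them
as columns satisfies `Aᵀ A = 1`, and `Aᵀ (h x - h 0) = x` forces `h x = A x + h 0`. The same
formula, read over `ℝ`, is an isometry of `ℝⁿ` extending `h`, bijective because `A` is invertible;
it maps `ℤⁿ` onto `ℤⁿ` because `h` is onto. The converse is a cast from `ℝ` to `ℤ`.
-/

/-- The canonical embedding `ℤⁿ → ℝⁿ`. -/
def intVec (n : ℕ) (z : Fin n → ℤ) : Fin n → ℝ := fun i => (z i : ℝ)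

/-- The integer lattice `ℤⁿ` viewed as a subset of `ℝⁿ`. -/
def intLattice (n : ℕ) : Set (Fin n → ℝ) := Set.range (intVec n)

open Matrix

section Orthogonal

variable {ι R : Type*} [Fintype ι] [CommRing R]

lemma sum_sub_sq_eq_dotProduct (x y : ι → R) :
    ∑ i, (x i - y i) ^ 2 = (x - y) ⬝ᵥ (x - y) := by
  simp only [dotProduct, Pi.sub_apply, sq]

lemma two_mul_dotProduct_eq (a b : ι → R) :
    2 * (a ⬝ᵥ b) = a ⬝ᵥ a + b ⬝ᵥ b - (a - b) ⬝ᵥ (a - b) := by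
  simp only [sub_dotProduct, dotProduct_sub, dotProduct_comm b a]
  ring

variable [DecidableEq ι]

lemma mulVec_dotProduct_mulVec_of_transpose_mul_self {A : Matrix ι ι R} (hA : Aᵀ * A = 1)
    (x y : ι → R) : A *ᵥ x ⬝ᵥ A *ᵥ y = x ⬝ᵥ y := by
  rw [dotProduct_mulVec, ← vecMul_transpose, vecMul_vecMul, hA, vecMul_one]

lemma sum_sub_sq_mulVec_add {A : Matrix ι ι R} (hA : Aᵀ * A = 1) (c x y : ι → R) :
    ∑ i, ((A *ᵥ x + c) i - (A *ᵥ y + c) i) ^ 2 = ∑ i, (x i - y i) ^ 2 := by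
  rw [sum_sub_sq_eq_dotProduct, sum_sub_sq_eq_dotProduct, add_sub_add_right_eq_sub,
    ← mulVec_sub, mulVec_dotProduct_mulVec_of_transpose_mul_self hA]

lemma bijective_mulVec_add {A : Matrix ι ι R} (hA : Aᵀ * A = 1) (c : ι → R) :
    Function.Bijective fun x => A *ᵥ x + c := by
  have hA' : A * Aᵀ = 1 := mul_eq_one_comm.mp hA
  refine Function.bijective_iff_has_inverse.mpr ⟨fun y => Aᵀ *ᵥ (y - c), fun x => ?_, fun y => ?_⟩
  · simp only [add_sub_cancel_right, mulVec_mulVec, hA, one_mulVec]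
  · simp only [mulVec_mulVec, hA', one_mulVec, sub_add_cancel]

lemma transpose_mul_self_map_eq_one {S : Type*} [CommRing S] (f : R →+* S) {A : Matrix ι ι R}
    (hA : Aᵀ * A = 1) : (A.map f)ᵀ * A.map f = 1 := by
  rw [← transpose_map, ← Matrix.map_mul, hA, Matrix.map_one _ f.map_zero f.map_one]

end Orthogonal

section Rigidity

variable {ι R : Type*} [Fintype ι] [CommRing R] [NoZeroDivisors R] [CharZero R]
  {h : (ι → R) → (ι → R)}

lemma dotProduct_sub_sub_of_sum_sub_sq
    (H : ∀ x y, ∑ i, (h x i - h y i) ^ 2 = ∑ i, (x i - y i) ^ 2) (x y : ι → R) :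
    (h x - h 0) ⬝ᵥ (h y - h 0) = x ⬝ᵥ y := by
  simp only [sum_sub_sq_eq_dotProduct] at H
  refine mul_left_cancel₀ (two_ne_zero' R) ?_
  rw [two_mul_dotProduct_eq, two_mul_dotProduct_eq x y, sub_sub_sub_cancel_right, H, H, H,
    sub_zero, sub_zero]

lemma exists_transpose_mul_self_eq_one_of_sum_sub_sq [DecidableEq ι]
    (H : ∀ x y, ∑ i, (h x i - h y i) ^ 2 = ∑ i, (x i - y i) ^ 2) :
    ∃ A : Matrix ι ι R, Aᵀ * A = 1 ∧ ∀ x, h x = A *ᵥ x + h 0 := by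
  set A : Matrix ι ι R := (of fun j => h (Pi.single j 1) - h 0)ᵀ
  have hAt : ∀ x, Aᵀ *ᵥ (h x - h 0) = x := fun x => funext fun k =>
    (dotProduct_sub_sub_of_sum_sub_sq H _ x).trans (single_one_dotProduct k x)
  have hcol : ∀ j, A *ᵥ Pi.single j 1 = h (Pi.single j 1) - h 0 := fun j => by
    rw [mulVec_single_one]; rfl
  have hA : Aᵀ * A = 1 := ext_of_mulVec_single fun j => by
    rw [← mulVec_mulVec, hcol, hAt, one_mulVec]
  refine ⟨A, hA, fun x => ?_⟩
  calc h x = A *ᵥ (Aᵀ *ᵥ (h x - h 0)) + h 0 := by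
        rw [mulVec_mulVec, mul_eq_one_comm.mp hA, one_mulVec, sub_add_cancel]
    _ = A *ᵥ x + h 0 := by rw [hAt]

end Rigidity

section IntLattice

variable {n : ℕ}

lemma intVec_mulVec_add (A : Matrix (Fin n) (Fin n) ℤ) (u z : Fin n → ℤ) :
    A.map (Int.cast : ℤ → ℝ) *ᵥ intVec n z + intVec n u = intVec n (A *ᵥ z + u) := by
  funext i
  simp only [Pi.add_apply, intVec, Int.cast_add]
  exact congrArg (· + _) (RingHom.map_mulVec (Int.castRingHom ℝ) A z i).symm

lemma image_intLattice_eq_of_surjective {g : (Fin n → ℝ) → (Fin n → ℝ)}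
    {h : (Fin n → ℤ) → (Fin n → ℤ)} (hgh : ∀ z, g (intVec n z) = intVec n (h z))
    (hh : Function.Surjective h) : g '' intLattice n = intLattice n := by
  rw [intLattice, ← Set.range_comp, show g ∘ intVec n = intVec n ∘ h from funext hgh,
    Set.range_comp, hh.range_eq, Set.image_univ]

lemma sum_sub_sq_of_intVec {g : (Fin n → ℝ) → (Fin n → ℝ)} {h : (Fin n → ℤ) → (Fin n → ℤ)}
    (hg : ∀ x y : Fin n → ℝ, ∑ i, (g x i - g y i) ^ 2 = ∑ i, (x i - y i) ^ 2)
    (hgh : ∀ z, g (intVec n z) = intVec n (h z)) (x y : Fin n → ℤ) :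
    ∑ i, (h x i - h y i) ^ 2 = ∑ i, (x i - y i) ^ 2 := by
  have := hg (intVec n x) (intVec n y)
  simp only [hgh, intVec] at this
  exact_mod_cast this

end IntLattice

/-- `ISO(ℤⁿ) = ISO(ℝⁿ)_{ℤⁿ}|_{ℤⁿ}`: (1) every isometry `h` of `ℤⁿ` (a map preserving the
Euclidean distance, expressed via squared distances) is the restriction of a bijective isometry
of `ℝⁿ` stabilizing `ℤⁿ` setwise, and is of the form `h(x) = Ax + u` with `A ∈ Oₙ(ℤ)` and
`u ∈ ℤⁿ`; and (2) conversely, the restriction to `ℤⁿ` of any bijective isometry of `ℝⁿ`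
stabilizing `ℤⁿ` is an isometry of `ℤⁿ`. -/
theorem iso_int_lattice_eq_restricted_stabilizer (n : ℕ) :
    (∀ h : (Fin n → ℤ) → (Fin n → ℤ),
      (∀ x y : Fin n → ℤ, ∑ i, (h x i - h y i) ^ 2 = ∑ i, (x i - y i) ^ 2) →
      ((∃ g : (Fin n → ℝ) → (Fin n → ℝ), Function.Bijective g ∧
          (∀ x y : Fin n → ℝ, ∑ i, (g x i - g y i) ^ 2 = ∑ i, (x i - y i) ^ 2) ∧
          g '' intLattice n = intLattice n ∧
          (∀ z : Fin n → ℤ, g (intVec n z) = intVec n (h z))) ∧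
        (∃ (A : Matrix (Fin n) (Fin n) ℤ) (u : Fin n → ℤ),
          A.transpose * A = 1 ∧ ∀ x : Fin n → ℤ, h x = A.mulVec x + u))) ∧
    (∀ g : (Fin n → ℝ) → (Fin n → ℝ), Function.Bijective g →
      (∀ x y : Fin n → ℝ, ∑ i, (g x i - g y i) ^ 2 = ∑ i, (x i - y i) ^ 2) →
      g '' intLattice n = intLattice n →
      ∀ h : (Fin n → ℤ) → (Fin n → ℤ),
        (∀ z : Fin n → ℤ, g (intVec n z) = intVec n (h z)) →
        ∀ x y : Fin n → ℤ, ∑ i, (h x i - h y i) ^ 2 = ∑ i, (x i - y i) ^ 2) := by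
  refine ⟨fun h H => ?_, fun g _ hg _ h hgh => sum_sub_sq_of_intVec hg hgh⟩
  obtain ⟨A, hA, hh⟩ := exists_transpose_mul_self_eq_one_of_sum_sub_sq H
  have hB := transpose_mul_self_map_eq_one (Int.castRingHom ℝ) hA
  have hgh : ∀ z, A.map (Int.cast : ℤ → ℝ) *ᵥ intVec n z + intVec n (h 0) = intVec n (h z) :=
    fun z => by rw [intVec_mulVec_add, ← hh]
  have hsurj : Function.Surjective h := by
    simpa only [← funext hh] using bijective_mulVec_add hA (h 0) |>.surjective
  exact ⟨⟨_, bijective_mulVec_add hB _, sum_sub_sq_mulVec_add hB _,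
    image_intLattice_eq_of_surjective hgh hsurj, hgh⟩, A, h 0, hA, hh⟩
end
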